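/- Let f : A ⥤ B be a functor and I f : (f/≅ B) ⥤ B the projection of the iso-comma category to B, sending (a, b, β : f a ≅ b) to b. Then I f is an isofibration, and if f is moreover a Grothendieck fibration up to isomorphism (a pseudo-fibration: every β : b ⟶ f a admits a lift α : a' ⟶ a cartesian up to isomorphism, meaning f α ≅ β in the appropriate sense, i.e. f α = β' for some β' isomorphic to β over a), then I f is a (strict) Grothendieck fibration. -/

import Mathlib

open CategoryTheory

universe v₁ v₂ u₁ u₂

variable {A : Type u₁} {B : Type u₂} [Category.{v₁} A] [Category.{v₂} B]

/-- `f` is an isofibration. -/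
def IsIsofibration (f : A ⥤ B) : Prop :=
  ∀ (a : A) (b : B) (β : b ≅ f.obj a),
    ∃ (a' : A) (σ : a' ≅ a) (h : f.obj a' = b),
      f.map σ.hom = eqToHom h ≫ β.hom

/-- `α : a' ⟶ a` is `f`-cartesian. -/
def IsCartesian (f : A ⥤ B) {a' a : A} (α : a' ⟶ a) : Prop :=
  ∀ {y : A} (τ' : y ⟶ a) (g : f.obj y ⟶ f.obj a'),
    f.map τ' = g ≫ f.map α →
      ∃! τ : y ⟶ a', f.map τ = g ∧ τ ≫ α = τ'

/-- `f` is a (strict) Grothendieck fibration. -/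
def IsGrothendieckFibration (f : A ⥤ B) : Prop :=
  ∀ (a : A) (b : B) (β : b ⟶ f.obj a),
    ∃ (a' : A) (α : a' ⟶ a) (h : f.obj a' = b),
      f.map α = eqToHom h ≫ β ∧ IsCartesian f α

/-- `f` is a pseudo-fibration: every `β : b ⟶ f a` admits a cartesian lift up to isomorphism,
i.e. a cartesian `α : a' ⟶ a` together with an isomorphism `θ : f a' ≅ b` such that
`f α = θ.hom ≫ β`. -/
def IsPseudoFibration (f : A ⥤ B) : Prop :=
  ∀ (a : A) (b : B) (β : b ⟶ f.obj a),
    ∃ (a' : A) (α : a' ⟶ a) (θ : f.obj a' ≅ b),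
      f.map α = θ.hom ≫ β ∧ IsCartesian f α

/-- The iso-comma category `f/≅ B`. -/
def IsoComma (f : A ⥤ B) : Type max u₁ u₂ v₂ :=
  ObjectProperty.FullSubcategory (fun X : Comma f (𝟭 B) => IsIso X.hom)

instance (f : A ⥤ B) : Category (IsoComma f) := ObjectProperty.FullSubcategory.category _

/-- The projection `I f : f/≅ B ⥤ B`, `(a, b, β : f a ≅ b) ↦ b`. -/
def isoCommaToBase (f : A ⥤ B) : IsoComma f ⥤ B :=
  ObjectProperty.ι _ ⋙ Comma.snd f (𝟭 B)

/-
In `f/≅ B` the `A`-component of a morphism `(α, β) : X ⟶ Y` is pinned down by its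
`B`-component, `f α = X.hom ≫ β ≫ Y.hom⁻¹`, so lifting problems for `I f` become lifting
problems for `f`: any morphism whose `A`-component is `f`-cartesian is `I f`-cartesian. Given
`β : b ⟶ I f X`, a pseudo-cartesian lift `α : a' ⟶ a` of `β ≫ X.hom⁻¹` with `θ : f a' ≅ b`
yields the strict lift `(α, β) : (a', b, θ) ⟶ X`, the isomorphism `θ` being absorbed into the
structure map of the new object. The same absorption of an isomorphism `b ≅ I f X` makes `I f`
an isofibration.
-/

namespace IsoComma

variable {f : A ⥤ B}

instance (X : IsoComma f) : IsIso X.obj.hom := X.property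

def mk {a : A} {b : B} (β : f.obj a ⟶ b) [IsIso β] : IsoComma f :=
  ⟨⟨a, b, β⟩, inferInstance⟩

def homMk {X Y : IsoComma f} (α : X.obj.left ⟶ Y.obj.left) (β : X.obj.right ⟶ Y.obj.right)
    (w : f.map α ≫ Y.obj.hom = X.obj.hom ≫ β) : X ⟶ Y :=
  ObjectProperty.homMk ⟨α, β, w⟩

lemma hom_ext {X Y : IsoComma f} {φ ψ : X ⟶ Y} (hl : φ.hom.left = ψ.hom.left)
    (hr : φ.hom.right = ψ.hom.right) : φ = ψ :=
  ObjectProperty.hom_ext _ (CommaMorphism.ext hl hr)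

lemma map_hom_left {X Y : IsoComma f} (φ : X ⟶ Y) :
    f.map φ.hom.left = X.obj.hom ≫ φ.hom.right ≫ inv Y.obj.hom := by
  rw [← Category.assoc, IsIso.eq_comp_inv]
  exact φ.hom.w

end IsoComma

theorem isoCommaToBase_isIsofibration (f : A ⥤ B) : IsIsofibration (isoCommaToBase f) :=
  fun X b (β : b ≅ X.obj.right) =>
    ⟨IsoComma.mk (X.obj.hom ≫ β.inv),
      ObjectProperty.isoMk _ (Comma.isoMk (Iso.refl X.obj.left) β (by simp [IsoComma.mk])),
      rfl, (Category.id_comp _).symm⟩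

theorem IsCartesian.isoCommaToBase {f : A ⥤ B} {X Y : IsoComma f} {φ : X ⟶ Y}
    (hφ : IsCartesian f φ.hom.left) : IsCartesian (isoCommaToBase f) φ := by
  intro Z τ' (g : Z.obj.right ⟶ X.obj.right) (hg : τ'.hom.right = g ≫ φ.hom.right)
  have hτ'_left : f.map τ'.hom.left = (Z.obj.hom ≫ g ≫ inv X.obj.hom) ≫ f.map φ.hom.left := by
    simp [IsoComma.map_hom_left, hg]
  obtain ⟨τ, ⟨hτ, hτφ⟩, huniq⟩ := hφ _ _ hτ'_left
  refine ⟨IsoComma.homMk τ g (by simp [hτ]), ⟨rfl, IsoComma.hom_ext hτφ hg.symm⟩, ?_⟩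
  rintro σ ⟨hσ : σ.hom.right = g, hσφ⟩
  exact IsoComma.hom_ext
    (huniq _ ⟨by simp [IsoComma.map_hom_left, hσ], congrArg (·.hom.left) hσφ⟩) hσ

theorem isoCommaToBase_isGrothendieckFibration {f : A ⥤ B} (hf : IsPseudoFibration f) :
    IsGrothendieckFibration (isoCommaToBase f) := by
  intro Y b (β : b ⟶ Y.obj.right)
  obtain ⟨a', α, θ, hα, hα_cart⟩ := hf Y.obj.left b (β ≫ inv Y.obj.hom)
  exact ⟨IsoComma.mk θ.hom, IsoComma.homMk α β (by simp [IsoComma.mk, hα]), rfl,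
    (Category.id_comp _).symm, hα_cart.isoCommaToBase⟩

/-- `I f : f/≅ B ⥤ B` is always an isofibration, and if `f` is a pseudo-fibration then `I f`
is a (strict) Grothendieck fibration. -/
theorem stmt19 (f : A ⥤ B) :
    IsIsofibration (isoCommaToBase f) ∧
      (IsPseudoFibration f → IsGrothendieckFibration (isoCommaToBase f)) :=
  ⟨isoCommaToBase_isIsofibration f, isoCommaToBase_isGrothendieckFibration⟩
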